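/- Let X ⊆ ℝⁿ be a nonempty convex compact set with κ = max_{x∈X} ‖x‖₂ > 0 and C = cone({κ} × X) ⊆ ℝ^{n+1}. Let positive weights (ω_t), losses f_t ∈ ℝⁿ and decisions x_t ∈ X for t = 1,…,T, with v_t = (⟨f_t, x_t⟩/κ, −f_t), CBA⁺ iterates u_0 = 0 and u_t = π_C(u_{t−1} + ω_t v_t), and the CBA⁺ choice rule: for every t there exists β_t ≥ 0 with u_{t−1} = β_t · (κ, x_t). Then ‖u_T‖₂² ≤ ∑_{t=1}^T ω_t² ‖v_t‖₂²; in particular, if ‖f_t‖₂ ≤ L for all t then ‖u_T‖₂ ≤ √2 · L · √(∑_{t=1}^T ω_t²). -/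

import Mathlib

set_option autoImplicit false

open scoped RealInnerProductSpace
open Finset

noncomputable section

/-- The lifted vector `(t, y) ∈ ℝ × ℝⁿ = ℝ^{n+1}`. -/
def pr {n : ℕ} (t : ℝ) (y : EuclideanSpace ℝ (Fin n)) :
    EuclideanSpace ℝ (Fin (n + 1)) :=
  WithLp.toLp 2 (Fin.cons t (fun i => y i) : Fin (n + 1) → ℝ)

/-- The conic hull `cone({κ} × X) = {α • (κ, x) : α ≥ 0, x ∈ X}`. -/
def coneLift {n : ℕ} (κ : ℝ) (X : Set (EuclideanSpace ℝ (Fin n))) :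
    Set (EuclideanSpace ℝ (Fin (n + 1))) :=
  {u | ∃ α : ℝ, 0 ≤ α ∧ ∃ x ∈ X, u = α • pr κ x}

/-- The polar cone `C° = {z : ⟨z, w⟩ ≤ 0 ∀ w ∈ C}`. -/
def polarCone {E : Type*} [NormedAddCommGroup E] [InnerProductSpace ℝ E]
    (C : Set E) : Set E :=
  {z | ∀ w ∈ C, ⟪z, w⟫ ≤ 0}

/-- `p` is the Euclidean orthogonal projection of `u` onto the set `S`. -/
def IsProjOn {E : Type*} [NormedAddCommGroup E] [InnerProductSpace ℝ E]
    (u : E) (S : Set E) (p : E) : Prop :=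
  p ∈ S ∧ ∀ z ∈ S, dist u p ≤ dist u z

/-! The choice rule makes `u_{t-1}` a multiple of `(κ, x_t)`, which is orthogonal to `v_t`, so
`‖u_{t-1} + ω_t v_t‖² = ‖u_{t-1}‖² + ω_t² ‖v_t‖²`. A projection `p` of `w` onto a cone minimises
`c ↦ ‖w - c p‖²` at `c = 1`, so `w - p ⟂ p` and `‖p‖ ≤ ‖w‖`. Summing the one-step bounds gives the
first claim; `‖v_t‖² ≤ 2 ‖f_t‖²` (Cauchy–Schwarz and `‖x_t‖ ≤ κ`) gives the second. -/

lemma inner_pr {n : ℕ} (a b : ℝ) (y z : EuclideanSpace ℝ (Fin n)) :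
    ⟪pr a y, pr b z⟫ = a * b + ⟪y, z⟫ := by
  simp [pr, PiLp.inner_apply, Fin.sum_univ_succ, RCLike.inner_apply]
  ring

lemma norm_pr_sq {n : ℕ} (a : ℝ) (y : EuclideanSpace ℝ (Fin n)) :
    ‖pr a y‖ ^ 2 = a ^ 2 + ‖y‖ ^ 2 := by
  rw [← real_inner_self_eq_norm_sq, inner_pr, real_inner_self_eq_norm_sq]
  ring

lemma smul_mem_coneLift {n : ℕ} {κ : ℝ} {X : Set (EuclideanSpace ℝ (Fin n))} {c : ℝ}
    (hc : 0 ≤ c) {p : EuclideanSpace ℝ (Fin (n + 1))} (hp : p ∈ coneLift κ X) :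
    c • p ∈ coneLift κ X := by
  obtain ⟨α, hα, y, hy, rfl⟩ := hp
  exact ⟨c * α, mul_nonneg hc hα, y, hy, smul_smul c α _⟩

section Projection

variable {E : Type*} [NormedAddCommGroup E] [InnerProductSpace ℝ E] {S : Set E} {w p : E}

lemma inner_sub_self_eq_zero_of_isProjOn (hS : ∀ c : ℝ, 0 ≤ c → ∀ q ∈ S, c • q ∈ S)
    (h : IsProjOn w S p) : ⟪w - p, p⟫ = 0 := by
  have hmin : IsLocalMin (fun c : ℝ => ‖w - c • p‖ ^ 2) 1 := by
    filter_upwards [lt_mem_nhds one_pos] with c hc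
    simpa [dist_eq_norm] using pow_le_pow_left₀ dist_nonneg (h.2 _ (hS c hc.le p h.1)) 2
  have hderiv := (((hasDerivAt_id' (1 : ℝ)).smul_const p).const_sub w).norm_sq
  simpa [inner_neg_right] using hmin.hasDerivAt_eq_zero hderiv

lemma norm_le_of_isProjOn (hS : ∀ c : ℝ, 0 ≤ c → ∀ q ∈ S, c • q ∈ S)
    (h : IsProjOn w S p) : ‖p‖ ≤ ‖w‖ := by
  have hpyth : ‖w‖ ^ 2 = ‖w - p‖ ^ 2 + ‖p‖ ^ 2 := by
    simpa [sq] using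
      norm_add_sq_eq_norm_sq_add_norm_sq_real (inner_sub_self_eq_zero_of_isProjOn hS h)
  exact (pow_le_pow_iff_left₀ (norm_nonneg _) (norm_nonneg _) two_ne_zero).1
    (hpyth ▸ le_add_of_nonneg_left (sq_nonneg _))

end Projection

lemma le_sum_Icc_of_le_add {a b : ℕ → ℝ} {T : ℕ} (h0 : a 0 ≤ 0)
    (h : ∀ t ∈ Icc 1 T, a t ≤ a (t - 1) + b t) : a T ≤ ∑ t ∈ Icc 1 T, b t := by
  induction T with
  | zero => simpa using h0
  | succ T ih =>
    rw [sum_Icc_succ_top (by omega)]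
    have hlast := h (T + 1) (by simp)
    have hprev := ih fun t ht => h t (Icc_subset_Icc_right T.le_succ ht)
    simp only [Nat.add_sub_cancel] at hlast
    linarith

section Lift

variable {n : ℕ} {κ : ℝ} (f x : EuclideanSpace ℝ (Fin n))

lemma inner_pr_pr_neg_eq_zero (hκ : κ ≠ 0) : ⟪pr κ x, pr (⟪f, x⟫ / κ) (-f)⟫ = 0 := by
  rw [inner_pr, mul_div_cancel₀ _ hκ, inner_neg_right, real_inner_comm, add_neg_cancel]

lemma norm_pr_neg_sq_le (hκ : 0 < κ) (hx : ‖x‖ ≤ κ) :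
    ‖pr (⟪f, x⟫ / κ) (-f)‖ ^ 2 ≤ 2 * ‖f‖ ^ 2 := by
  have hcs : |⟪f, x⟫| ≤ ‖f‖ * κ :=
    (abs_real_inner_le_norm f x).trans (mul_le_mul_of_nonneg_left hx (norm_nonneg f))
  have hfirst : (⟪f, x⟫ / κ) ^ 2 ≤ ‖f‖ ^ 2 := by
    rw [← sq_abs, abs_div, abs_of_pos hκ]
    exact pow_le_pow_left₀ (by positivity) ((div_le_iff₀ hκ).2 hcs) 2
  rw [norm_pr_sq, norm_neg]
  linarith

end Lift

theorem stmt7_general {n : ℕ} (X : Set (EuclideanSpace ℝ (Fin n)))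
    (κ : ℝ) (hκ : IsGreatest ((fun x => ‖x‖) '' X) κ) (hκpos : 0 < κ)
    (T : ℕ) (hT : 1 ≤ T)
    (ω : ℕ → ℝ)
    (f x : ℕ → EuclideanSpace ℝ (Fin n)) (hx : ∀ t ∈ Icc 1 T, x t ∈ X)
    (L : ℝ) (hL : ∀ t ∈ Icc 1 T, ‖f t‖ ≤ L)
    (v : ℕ → EuclideanSpace ℝ (Fin (n + 1)))
    (hv : ∀ t, v t = pr (⟪f t, x t⟫ / κ) (-(f t)))
    (u : ℕ → EuclideanSpace ℝ (Fin (n + 1))) (hu0 : u 0 = 0)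
    (hu : ∀ t ∈ Icc 1 T, IsProjOn (u (t - 1) + ω t • v t) (coneLift κ X) (u t))
    (hchoice : ∀ t ∈ Icc 1 T, ∃ β : ℝ, 0 ≤ β ∧ u (t - 1) = β • pr κ (x t)) :
    ‖u T‖ ^ 2 ≤ (∑ t ∈ Icc 1 T, ω t ^ 2 * ‖v t‖ ^ 2) ∧
      ‖u T‖ ≤ Real.sqrt 2 * L * Real.sqrt (∑ t ∈ Icc 1 T, ω t ^ 2) := by
  have hstep : ∀ t ∈ Icc 1 T, ‖u t‖ ^ 2 ≤ ‖u (t - 1)‖ ^ 2 + ω t ^ 2 * ‖v t‖ ^ 2 := by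
    intro t ht
    obtain ⟨β, -, hβ⟩ := hchoice t ht
    have horth : ⟪u (t - 1), v t⟫ = 0 := by
      rw [hβ, hv, real_inner_smul_left, inner_pr_pr_neg_eq_zero _ _ hκpos.ne', mul_zero]
    calc ‖u t‖ ^ 2 ≤ ‖u (t - 1) + ω t • v t‖ ^ 2 :=
          pow_le_pow_left₀ (norm_nonneg _)
            (norm_le_of_isProjOn (fun _ hc _ hq => smul_mem_coneLift hc hq) (hu t ht)) 2
      _ = ‖u (t - 1)‖ ^ 2 + ω t ^ 2 * ‖v t‖ ^ 2 := by
          rw [norm_add_sq_real, real_inner_smul_right, horth, norm_smul, Real.norm_eq_abs,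
            mul_pow, sq_abs]
          ring
  have hbound := le_sum_Icc_of_le_add (a := fun t => ‖u t‖ ^ 2) (by simp [hu0]) hstep
  refine ⟨hbound, ?_⟩
  have hL0 : 0 ≤ L := (norm_nonneg _).trans (hL 1 (by simp [hT]))
  have hsum : ∑ t ∈ Icc 1 T, ω t ^ 2 * ‖v t‖ ^ 2 ≤ 2 * L ^ 2 * ∑ t ∈ Icc 1 T, ω t ^ 2 := by
    rw [mul_sum]
    refine sum_le_sum fun t ht => ?_
    rw [hv, mul_comm]
    gcongr
    calc ‖pr (⟪f t, x t⟫ / κ) (-f t)‖ ^ 2 ≤ 2 * ‖f t‖ ^ 2 :=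
          norm_pr_neg_sq_le _ _ hκpos (hκ.2 ⟨x t, hx t ht, rfl⟩)
      _ ≤ 2 * L ^ 2 := by gcongr; exact hL t ht
  calc ‖u T‖ = |‖u T‖| := (abs_norm _).symm
    _ ≤ Real.sqrt (2 * L ^ 2 * ∑ t ∈ Icc 1 T, ω t ^ 2) := Real.abs_le_sqrt (hbound.trans hsum)
    _ = Real.sqrt 2 * L * Real.sqrt (∑ t ∈ Icc 1 T, ω t ^ 2) := by
      rw [Real.sqrt_mul (by positivity), Real.sqrt_mul zero_le_two, Real.sqrt_sq hL0]

/-- norm bound in the proof of Theorem 3: for CBA⁺ iterates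
`u_t = π_C(u_{t-1} + ω_t v_t)` with the CBA⁺ choice rule `u_{t-1} = β_t • (κ, x_t)`,
one has `‖u_T‖₂² ≤ ∑ ω_t² ‖v_t‖₂²`; in particular `‖u_T‖₂ ≤ √2 L √(∑ ω_t²)`
when `‖f_t‖₂ ≤ L`. -/
theorem stmt7 {n : ℕ} (X : Set (EuclideanSpace ℝ (Fin n)))
    (hXne : X.Nonempty) (hXcv : Convex ℝ X) (hXcp : IsCompact X)
    (κ : ℝ) (hκ : IsGreatest ((fun x => ‖x‖) '' X) κ) (hκpos : 0 < κ)
    (T : ℕ) (hT : 1 ≤ T)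
    (ω : ℕ → ℝ) (hω : ∀ t ∈ Icc 1 T, 0 < ω t)
    (f x : ℕ → EuclideanSpace ℝ (Fin n)) (hx : ∀ t ∈ Icc 1 T, x t ∈ X)
    (L : ℝ) (hL : ∀ t ∈ Icc 1 T, ‖f t‖ ≤ L)
    (v : ℕ → EuclideanSpace ℝ (Fin (n + 1)))
    (hv : ∀ t, v t = pr (⟪f t, x t⟫ / κ) (-(f t)))
    (u : ℕ → EuclideanSpace ℝ (Fin (n + 1))) (hu0 : u 0 = 0)
    (hu : ∀ t ∈ Icc 1 T, IsProjOn (u (t - 1) + ω t • v t) (coneLift κ X) (u t))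
    (hchoice : ∀ t ∈ Icc 1 T, ∃ β : ℝ, 0 ≤ β ∧ u (t - 1) = β • pr κ (x t)) :
    ‖u T‖ ^ 2 ≤ (∑ t ∈ Icc 1 T, ω t ^ 2 * ‖v t‖ ^ 2) ∧
      ‖u T‖ ≤ Real.sqrt 2 * L * Real.sqrt (∑ t ∈ Icc 1 T, ω t ^ 2) :=
  stmt7_general X κ hκ hκpos T hT ω f x hx L hL v hv u hu0 hu hchoice

end
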